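/- arXiv:1309.6477 — 3 statements merged into one kernel-verified Lean document; each statement's English description precedes it below -/
import Mathlib

section
/- Let (a,b) ⊆ (0,1) be an interval containing at least one point of the form 1/l with integer l ≥ 2, and let 1/p = max{1/l : l ∈ ℕ, 1/l < b} be the maximal such partitioning point in (a,b), with 1/p ∈ (a,b). Then DNF restricted to input sequences with all item sizes in (a,b) has min/min ratio max{(1 + 1/p)/(1 + b), p·b/(1 + b)}. -/
open Filter MeasureTheory

/-- A valid bin covering input: all item sizes lie strictly between 0 and 1. -/
def validInput (I : List ℝ) : Prop := ∀ x ∈ I, 0 < x ∧ x < 1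

/-- The total volume (sum of item sizes) of an input sequence. -/
def vol (I : List ℝ) : ℝ := I.sum

/-- One step of Dual Next-Fit: the state is the level of the open bin (0 if none)
together with the number of covered (closed) bins so far. -/
noncomputable def dnfStep (s : ℝ × ℕ) (x : ℝ) : ℝ × ℕ :=
  if 1 ≤ s.1 + x then (0, s.2 + 1) else (s.1 + x, s.2)

/-- The number of bins covered by Dual Next-Fit on input `I`. -/
noncomputable def dnfCount (I : List ℝ) : ℕ := (I.foldl dnfStep (0, 0)).2

/-- The number of bins covered by the Dual Harmonic algorithm `DH_k` on input `I`:
items in `[1/j, 1/(j-1))` (for `2 ≤ j ≤ k`) are packed `j` to a bin, and items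
in `(0, 1/k)` are packed in Next-Fit fashion in separate bins. -/
noncomputable def dhCount (k : ℕ) (I : List ℝ) : ℕ :=
  (∑ j ∈ Finset.Icc 2 k,
      (I.countP fun x => decide ((1:ℝ)/(j:ℝ) ≤ x ∧ x < 1/((j:ℝ)-1))) / j)
  + dnfCount (I.filter fun x => decide (x < 1/(k:ℝ)))

/-- The optimal (offline) number of covered bins: the maximum, over all assignments
of the items of `I` to bins, of the number of bins receiving total size at least 1. -/
noncomputable def optCount (I : List ℝ) : ℕ :=
  Finset.sup Finset.univ (fun f : Fin I.length → Fin I.length =>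
    (Finset.univ.filter fun b : Fin I.length =>
      1 ≤ ∑ i ∈ Finset.univ.filter (fun i => f i = b), I.get i).card)

/-- The competitive ratio of the algorithm `A` restricted to input sequences with
all item sizes in `S`: the supremum of all `c` such that for some constant `b`,
`A I ≥ c·Opt I + b` for all such inputs. -/
noncomputable def CRrestricted (S : Set ℝ) (A : List ℝ → ℕ) : ℝ :=
  sSup {c : ℝ | ∃ b : ℝ, ∀ I : List ℝ, (∀ x ∈ I, x ∈ S) →
    c * (optCount I : ℝ) + b ≤ (A I : ℝ)}

/-- `A`'s performance on a worst permutation of `I`. -/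
noncomputable def worstOf (A : List ℝ → ℕ) (I : List ℝ) : ℕ :=
  (I.permutations.map A).foldr min (A I)

/-- The expected performance of `A` on a uniformly random permutation of `I`. -/
noncomputable def expPerm (A : List ℝ → ℕ) (I : List ℝ) : ℝ :=
  (∑ σ : Equiv.Perm (Fin I.length), (A (List.ofFn fun i => I.get (σ i)) : ℝ)) /
    ((I.length).factorial : ℝ)

/-- `liminf_{v→∞} inf { A(I)/v : vol I = v, items of I in S }`. -/
noncomputable def minRate (S : Set ℝ) (A : List ℝ → ℕ) : ℝ :=
  Filter.liminf (fun v : ℝ =>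
    sInf {r : ℝ | ∃ I : List ℝ, (∀ x ∈ I, x ∈ S) ∧ vol I = v ∧ r = (A I : ℝ) / v})
    Filter.atTop

/-- Expected performance of `A` on `n` items drawn independently and uniformly from `(0,1)`. -/
noncomputable def unifE (A : List ℝ → ℕ) (n : ℕ) : ℝ :=
  ∫ x : Fin n → ℝ, (A (List.ofFn x) : ℝ)
    ∂(Measure.pi fun _ : Fin n => volume.restrict (Set.Ioo (0:ℝ) 1))

/-- Expected performance of `A` on `n` independent items, each of size `ε` with
probability 1/2 and size `1-ε` with probability 1/2. -/
noncomputable def bernE (A : List ℝ → ℕ) (n : ℕ) (ε : ℝ) : ℝ :=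
  (∑ f : Fin n → Bool, (A (List.ofFn fun i => if f i then ε else 1 - ε) : ℝ)) / 2^n

/-- One step of a reasonable online algorithm with decision function `f`:
the accumulator records (history of items seen, levels of the open bins, number of
covered bins).  On item `x`, the algorithm places `x` in the open bin of index
`f hist x` (a new bin is opened if the index is out of range); a bin is closed
exactly when its content reaches 1. -/
noncomputable def algStep (f : List ℝ → ℝ → ℕ) (acc : List ℝ × List ℝ × ℕ) (x : ℝ) :
    List ℝ × List ℝ × ℕ :=
  let hist := acc.1
  let s := acc.2.1
  let c := acc.2.2
  let i := f hist x
  if h : i < s.length then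
    if 1 ≤ s.get ⟨i, h⟩ + x then (hist ++ [x], s.eraseIdx i, c + 1)
    else (hist ++ [x], s.set i (s.get ⟨i, h⟩ + x), c)
  else
    if 1 ≤ x then (hist ++ [x], s, c + 1)
    else (hist ++ [x], s ++ [x], c)

/-- Running the reasonable online algorithm with decision function `f` on input `I`. -/
noncomputable def runAlg (f : List ℝ → ℝ → ℕ) (I : List ℝ) : List ℝ × List ℝ × ℕ :=
  I.foldl (algStep f) ([], [], 0)

open Finset Topology

/-!
Dual Next-Fit closes every bin at a level below `1 + b`, so it covers at least
`(vol I - 1) / (1 + b)` bins; repeating a block of `p` items just below `1/p` followed by one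
item just below `b` shows that `1 / (1 + b)` is the exact rate.

An optimal covering does better: grouping the items of size at least `1/p` by `p` (a group
has volume below `p * b`) and cutting the smaller ones into consecutive groups of volume in
`[1, 1 + 1/p)` covers at least `vol I / M - 2` bins, where `M = max (1 + 1/p) (p * b)`.
Equal items just below `1/p` (needing `p + 1` per bin) or just below `b` (needing `p` per bin,
since `(p - 1) * b ≤ 1` by maximality of `1/p`) show that `1 / M` is the exact rate, and the
ratio of the two rates is `M / (1 + b)`.
-/

lemma add_one_mul_le_of_lt_floor_div {S c : ℝ} (hc : 0 < c) {t : ℕ} (ht : t < ⌊S / c⌋₊) :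
    (t + 1) * c ≤ S := by
  have := (Nat.le_floor_iff' t.succ_ne_zero).mp ht
  push_cast at this
  rwa [le_div_iff₀ hc] at this

lemma le_of_natCast_sub_one_lt {m n : ℕ} (h : (m : ℝ) - 1 < n) : m ≤ n := by
  have : (m : ℝ) < n + 1 := by linarith
  exact Nat.lt_add_one_iff.mp (by exact_mod_cast this)

section DualNextFit

lemma dnfStep_fst_lt_one (s : ℝ × ℕ) (x : ℝ) : (dnfStep s x).1 < 1 := by
  unfold dnfStep
  split_ifs with h
  · exact one_pos
  · exact not_le.mp h

lemma foldl_dnfStep_fst_lt_one (I : List ℝ) {s : ℝ × ℕ} (hs : s.1 < 1) :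
    (I.foldl dnfStep s).1 < 1 := by
  induction I generalizing s with
  | nil => exact hs
  | cons x I ih => exact ih (dnfStep_fst_lt_one s x)

/-- A bin is closed at a level below `1 + b`. -/
lemma foldl_dnfStep_potential {b : ℝ} (I : List ℝ) (hI : ∀ x ∈ I, x ≤ b) {s : ℝ × ℕ}
    (hs : s.1 < 1) :
    s.2 * (1 + b) + s.1 + I.sum ≤
      (I.foldl dnfStep s).2 * (1 + b) + (I.foldl dnfStep s).1 := by
  induction I generalizing s with
  | nil => simp
  | cons x I ih =>
    have step : s.2 * (1 + b) + s.1 + x ≤ (dnfStep s x).2 * (1 + b) + (dnfStep s x).1 := by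
      have hx := hI x List.mem_cons_self
      unfold dnfStep
      split_ifs
      · push_cast; linarith
      · simp only; linarith
    have := ih (fun y hy => hI y (List.mem_cons_of_mem x hy)) (dnfStep_fst_lt_one s x)
    simp only [List.foldl_cons, List.sum_cons] at this ⊢
    linarith

theorem vol_le_dnfCount {b : ℝ} (I : List ℝ) (hI : ∀ x ∈ I, x ≤ b) :
    vol I ≤ dnfCount I * (1 + b) + 1 := by
  have h := foldl_dnfStep_potential I hI (s := (0, 0)) one_pos
  have hlt := foldl_dnfStep_fst_lt_one I (s := (0, 0)) one_pos
  simp only [Nat.cast_zero, zero_mul, zero_add] at h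
  unfold vol dnfCount
  linarith

lemma foldl_dnfStep_of_sum_lt_one (L : List ℝ) (hL : ∀ x ∈ L, 0 ≤ x) {s : ℝ × ℕ}
    (hs : s.1 + L.sum < 1) : L.foldl dnfStep s = (s.1 + L.sum, s.2) := by
  induction L generalizing s with
  | nil => simp
  | cons x L ih =>
    have hsum := List.sum_nonneg fun y hy => hL y (List.mem_cons_of_mem x hy)
    simp only [List.sum_cons] at hs ⊢
    have hopen : ¬ 1 ≤ s.1 + x := by linarith
    rw [List.foldl_cons, dnfStep, if_neg hopen,
      ih (fun y hy => hL y (List.mem_cons_of_mem x hy)) (by simpa only [add_assoc] using hs)]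
    simp only [add_assoc]

lemma foldl_dnfStep_append_singleton (L : List ℝ) (hL : ∀ x ∈ L, 0 ≤ x) (hL1 : L.sum < 1)
    {t : ℝ} (ht : 1 ≤ L.sum + t) (c : ℕ) : (L ++ [t]).foldl dnfStep (0, c) = (0, c + 1) := by
  rw [List.foldl_append, foldl_dnfStep_of_sum_lt_one L hL (by simpa using hL1)]
  simp [dnfStep, ht]

lemma dnfCount_flatten_replicate (L : List ℝ) (hL : ∀ x ∈ L, 0 ≤ x) (hL1 : L.sum < 1)
    {t : ℝ} (ht : 1 ≤ L.sum + t) (n : ℕ) :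
    dnfCount (List.replicate n (L ++ [t])).flatten = n := by
  suffices ∀ c, ((List.replicate n (L ++ [t])).flatten.foldl dnfStep (0, c)) = (0, c + n) by
    simp [dnfCount, this 0]
  induction n with
  | zero => simp
  | succ n ih =>
    intro c
    rw [List.replicate_succ, List.flatten_cons, List.foldl_append,
      foldl_dnfStep_append_singleton L hL hL1 ht, ih, add_right_comm, add_assoc]

end DualNextFit

section PrefixSum

variable {ι : Type*} [Fintype ι] [LinearOrder ι]

def prefixSum (w : ι → ℝ) (i : ι) : ℝ := ∑ j ∈ univ.filter (· < i), w j

lemma prefixSum_nonneg {w : ι → ℝ} (hw : ∀ i, 0 ≤ w i) (i : ι) : 0 ≤ prefixSum w i :=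
  sum_nonneg fun j _ => hw j

lemma le_sum_filter_prefixSum_lt {w : ι → ℝ} (hw : ∀ i, 0 ≤ w i) {u : ℝ}
    (hu : u ≤ ∑ i, w i) : u ≤ ∑ i ∈ univ.filter (fun i => prefixSum w i < u), w i := by
  by_cases hall : ∀ i, prefixSum w i < u
  · simpa [hall] using hu
  obtain ⟨i, hi⟩ := not_forall.mp hall
  obtain ⟨i₀, hi₀, hmin⟩ := (univ.filter fun i => u ≤ prefixSum w i).exists_min_image id
    ⟨i, mem_filter.mpr ⟨mem_univ i, not_lt.mp hi⟩⟩
  have hsub : univ.filter (· < i₀) ⊆ univ.filter (fun i => prefixSum w i < u) := by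
    intro j hj
    simp only [mem_filter, mem_univ, true_and] at hj ⊢
    by_contra hge
    exact absurd (hmin j (by simpa using not_lt.mp hge)) (not_le.mpr hj)
  calc u ≤ prefixSum w i₀ := (mem_filter.mp hi₀).2
    _ ≤ _ := sum_le_sum_of_subset_of_nonneg hsub fun j _ _ => hw j

lemma sum_filter_prefixSum_lt_lt {w : ι → ℝ} {β : ℝ} (hw : ∀ i, 0 ≤ w i ∧ w i ≤ β)
    (hβ : 0 < β) {u : ℝ} (hu : 0 ≤ u) :
    ∑ i ∈ univ.filter (fun i => prefixSum w i < u), w i < u + β := by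
  rcases (univ.filter fun i => prefixSum w i < u).eq_empty_or_nonempty with hempty | hne
  · rw [hempty, sum_empty]; linarith
  obtain ⟨i₀, hi₀, hmax⟩ := exists_max_image _ id hne
  have hsub : univ.filter (fun i => prefixSum w i < u) ⊆ insert i₀ (univ.filter (· < i₀)) := by
    intro j hj
    rcases (hmax j hj).eq_or_lt with rfl | hlt
    · exact mem_insert_self j _
    · exact mem_insert_of_mem (mem_filter.mpr ⟨mem_univ j, hlt⟩)
  calc _ ≤ ∑ i ∈ insert i₀ (univ.filter (· < i₀)), w i :=
        sum_le_sum_of_subset_of_nonneg hsub fun j _ _ => (hw j).1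
    _ = w i₀ + prefixSum w i₀ := sum_insert (by simp)
    _ < u + β := by linarith [(hw i₀).2, (mem_filter.mp hi₀).2]

lemma sub_lt_sum_filter_floor_prefixSum_eq {w : ι → ℝ} {β : ℝ} (hw : ∀ i, 0 ≤ w i ∧ w i ≤ β)
    (hβ : 0 < β) {c : ℝ} (hc : 0 < c) {t : ℕ} (ht : (t + 1) * c ≤ ∑ i, w i) :
    c - β < ∑ i ∈ univ.filter (fun i => ⌊prefixSum w i / c⌋₊ = t), w i := by
  have hsdiff : univ.filter (fun i => ⌊prefixSum w i / c⌋₊ = t) =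
      univ.filter (fun i => prefixSum w i < (t + 1) * c) \
        univ.filter (fun i => prefixSum w i < t * c) := by
    ext i
    simp only [Finset.mem_sdiff, mem_filter, mem_univ, true_and, not_lt,
      Nat.floor_eq_iff (div_nonneg (prefixSum_nonneg (fun j => (hw j).1) i) hc.le),
      le_div_iff₀ hc, div_lt_iff₀ hc]
    tauto
  have hsub : univ.filter (fun i => prefixSum w i < t * c) ⊆
      univ.filter (fun i => prefixSum w i < (t + 1) * c) :=
    fun i => by simp only [mem_filter, mem_univ, true_and]; intro h; linarith
  rw [hsdiff, sum_sdiff_eq_sub hsub]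
  have := le_sum_filter_prefixSum_lt (fun i => (hw i).1) ht
  have := sum_filter_prefixSum_lt_lt hw hβ (u := t * c) (by positivity)
  linarith

end PrefixSum

section OptimalCovering

lemma le_optCount_of_groups (I : List ℝ) (hI : ∀ x ∈ I, 0 ≤ x) (g : Fin I.length → ℕ) (m : ℕ)
    (hg : ∀ t < m, 1 ≤ ∑ i ∈ univ.filter (fun i => g i = t), I.get i) : m ≤ optCount I := by
  have hm : m ≤ I.length := by
    have hsurj : range m ⊆ univ.image g := by
      intro t ht
      obtain ⟨i, hi⟩ : (univ.filter fun i => g i = t).Nonempty := by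
        by_contra hempty
        have := hg t (mem_range.mp ht)
        rw [not_nonempty_iff_eq_empty.mp hempty, sum_empty] at this
        linarith
      exact mem_image.mpr ⟨i, mem_univ i, (mem_filter.mp hi).2⟩
    simpa using (card_le_card hsurj).trans card_image_le
  obtain _ | hpos := Nat.eq_zero_or_pos m
  · omega
  -- bin `t < m` receives the group `t`; the other items are spread arbitrarily
  let f : Fin I.length → Fin I.length := fun i => ⟨g i % I.length, Nat.mod_lt _ (by omega)⟩
  have hcovered : univ.filter (fun b : Fin I.length => b.val < m) ⊆
      univ.filter fun b => 1 ≤ ∑ i ∈ univ.filter (fun i => f i = b), I.get i := by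
    intro b hb
    have hbm := (mem_filter.mp hb).2
    refine mem_filter.mpr ⟨mem_univ b, (hg b hbm).trans ?_⟩
    refine sum_le_sum_of_subset_of_nonneg (fun i hi => ?_) fun i _ _ => hI _ (List.get_mem I i)
    have hgi : g i = b := (mem_filter.mp hi).2
    simp only [mem_filter, mem_univ, true_and, f, Fin.ext_iff, hgi, Nat.mod_eq_of_lt b.isLt]
  calc m = (univ.filter fun b : Fin I.length => b.val < m).card := by
        rw [Fin.card_filter_val_lt, min_eq_right hm]
    _ ≤ _ := card_le_card hcovered
    _ ≤ optCount I := le_sup (f := fun f : Fin I.length → Fin I.length =>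
        (univ.filter fun b => 1 ≤ ∑ i ∈ univ.filter (fun i => f i = b), I.get i).card)
        (mem_univ f)

lemma optCount_replicate_mul_le {s : ℝ} (hs : 0 < s) {k : ℕ} (hk : ((k : ℝ) - 1) * s < 1)
    (n : ℕ) : optCount (List.replicate n s) * k ≤ n := by
  obtain rfl | hk0 := Nat.eq_zero_or_pos k
  · simp
  rw [← Nat.le_div_iff_mul_le hk0]
  refine Finset.sup_le fun f _ => (Nat.le_div_iff_mul_le hk0).mpr ?_
  set B := univ.filter fun b => 1 ≤ ∑ i ∈ univ.filter (fun i => f i = b), (List.replicate n s).get i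
  have hfiber : ∀ b ∈ B, k ≤ (univ.filter fun i => f i = b).card := by
    intro b hb
    have hcov := (mem_filter.mp hb).2
    simp only [List.get_eq_getElem, List.getElem_replicate, sum_const, nsmul_eq_mul] at hcov
    exact le_of_natCast_sub_one_lt (by nlinarith)
  calc B.card * k = ∑ _b ∈ B, k := by rw [sum_const, smul_eq_mul]
    _ ≤ ∑ b ∈ B, (univ.filter fun i => f i = b).card := sum_le_sum hfiber
    _ ≤ ∑ b, (univ.filter fun i => f i = b).card := sum_le_sum_of_subset (filter_subset _ _)
    _ = n := by rw [← card_eq_sum_card_fiberwise fun i _ => mem_univ (f i)]; simp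

lemma vol_eq_sum_get (I : List ℝ) : vol I = ∑ i, I.get i := by
  rw [vol, ← List.sum_ofFn, List.ofFn_get]

end OptimalCovering

noncomputable section Grouping

variable {ι : Type*}

def bigWeight (p : ℕ) (x : ι → ℝ) (i : ι) : ℝ := if 1 / p ≤ x i then 1 else 0

def smallWeight (p : ℕ) (x : ι → ℝ) (i : ι) : ℝ := if x i < 1 / p then x i else 0

lemma bigWeight_mem_Icc (p : ℕ) (x : ι → ℝ) (i : ι) : bigWeight p x i ∈ Set.Icc 0 1 := by
  unfold bigWeight; split_ifs <;> norm_num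

lemma smallWeight_mem_Icc (p : ℕ) {x : ι → ℝ} (hx : ∀ i, 0 ≤ x i) (i : ι) :
    smallWeight p x i ∈ Set.Icc 0 (1 / p : ℝ) := by
  unfold smallWeight; split_ifs with h
  · exact ⟨hx i, h.le⟩
  · exact ⟨le_rfl, by positivity⟩

variable [Fintype ι]

def numBigGroups (p : ℕ) (x : ι → ℝ) : ℕ := ⌊(∑ i, bigWeight p x i) / p⌋₊

def numSmallGroups (p : ℕ) (x : ι → ℝ) : ℕ := ⌊(∑ i, smallWeight p x i) / (1 + 1 / p)⌋₊

variable {p : ℕ} {x : ι → ℝ}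

lemma sum_div_max_sub_two_le {b : ℝ} (hx : ∀ i, 0 ≤ x i ∧ x i ≤ b) (hp : 0 < p) :
    (∑ i, x i) / max (1 + 1 / (p : ℝ)) (p * b) - 2 ≤ numBigGroups p x + numSmallGroups p x := by
  have hp' : (0 : ℝ) < p := Nat.cast_pos.mpr hp
  set c : ℝ := 1 + 1 / p
  have hc : 0 < c := by positivity
  set M := max c (p * b)
  have hM : c ≤ M ∧ p * b ≤ M := ⟨le_max_left _ _, le_max_right _ _⟩
  set S₁ := ∑ i, bigWeight p x i
  set S₂ := ∑ i, smallWeight p x i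
  have hS₂ : 0 ≤ S₂ := sum_nonneg fun i _ => (smallWeight_mem_Icc p (fun i => (hx i).1) i).1
  have hsum : ∑ i, x i ≤ S₂ + b * S₁ := by
    rw [mul_sum, ← sum_add_distrib]
    refine sum_le_sum fun i _ => ?_
    simp only [bigWeight, smallWeight]
    split_ifs <;> linarith [hx i]
  have h₂ : S₂ ≤ S₂ / c * M := by
    rw [div_mul_eq_mul_div, le_div_iff₀ hc]
    exact mul_le_mul_of_nonneg_left hM.1 hS₂
  have h₁ : b * S₁ ≤ S₁ / p * M := by
    rw [div_mul_eq_mul_div, le_div_iff₀ hp']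
    nlinarith [hM.2, sum_nonneg fun i (_ : i ∈ univ) => (bigWeight_mem_Icc p x i).1]
  have hsplit : (∑ i, x i) / M ≤ S₂ / c + S₁ / p := by
    rw [div_le_iff₀ (hc.trans_le hM.1), add_mul]
    linarith
  unfold numBigGroups numSmallGroups
  linarith [Nat.lt_floor_add_one (S₁ / p), Nat.lt_floor_add_one (S₂ / c)]

variable [LinearOrder ι]

/-- Items of size at least `1/p` are grouped `p` at a time in their order of appearance; the
others are cut, through their prefix sums, into consecutive groups of weight at least `1`. -/
def coverGroup (p : ℕ) (x : ι → ℝ) (i : ι) : ℕ :=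
  if x i < 1 / p then numBigGroups p x + ⌊prefixSum (smallWeight p x) i / (1 + 1 / p)⌋₊
  else ⌊prefixSum (bigWeight p x) i / p⌋₊

lemma one_le_sum_filter_coverGroup_eq_of_lt (hx : ∀ i, 0 ≤ x i) (hp : 0 < p) {t : ℕ}
    (ht : t < numBigGroups p x) : 1 ≤ ∑ i ∈ univ.filter (fun i => coverGroup p x i = t), x i := by
  have hp' : (0 : ℝ) < p := Nat.cast_pos.mpr hp
  set G := univ.filter fun i => ⌊prefixSum (bigWeight p x) i / p⌋₊ = t
  have htot : (t + 1) * (p : ℝ) ≤ ∑ i, bigWeight p x i := add_one_mul_le_of_lt_floor_div hp' ht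
  have hcard : p ≤ (G.filter fun i => 1 / p ≤ x i).card := by
    have := sub_lt_sum_filter_floor_prefixSum_eq (bigWeight_mem_Icc p x) one_pos hp' htot
    simp only [bigWeight, sum_boole] at this
    exact le_of_natCast_sub_one_lt this
  have hsub : G.filter (fun i => 1 / p ≤ x i) ⊆ univ.filter (fun i => coverGroup p x i = t) := by
    intro i hi
    simp only [G, mem_filter, mem_univ, true_and] at hi ⊢
    simp only [coverGroup, if_neg (not_lt.mpr hi.2), hi.1]
  calc (1 : ℝ) = p * (1 / p) := by field_simp
    _ ≤ (G.filter fun i => 1 / p ≤ x i).card * (1 / p) := by gcongr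
    _ ≤ ∑ i ∈ G.filter (fun i => 1 / p ≤ x i), x i := by
      rw [← nsmul_eq_mul]; exact card_nsmul_le_sum _ _ _ fun i hi => (mem_filter.mp hi).2
    _ ≤ _ := sum_le_sum_of_subset_of_nonneg hsub fun i _ _ => hx i

lemma one_le_sum_filter_coverGroup_eq_add (hx : ∀ i, 0 ≤ x i) (hp : 0 < p) {t : ℕ}
    (ht : t < numSmallGroups p x) :
    1 ≤ ∑ i ∈ univ.filter (fun i => coverGroup p x i = numBigGroups p x + t), x i := by
  have hc : (0 : ℝ) < 1 + 1 / p := by positivity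
  have htot : (t + 1) * (1 + 1 / p : ℝ) ≤ ∑ i, smallWeight p x i :=
    add_one_mul_le_of_lt_floor_div hc ht
  have hsub : (univ.filter fun i => ⌊prefixSum (smallWeight p x) i / (1 + 1 / p)⌋₊ = t).filter
      (fun i => x i < 1 / p) ⊆
      univ.filter (fun i => coverGroup p x i = numBigGroups p x + t) := by
    intro i hi
    simp only [mem_filter, mem_univ, true_and] at hi ⊢
    simp only [coverGroup, if_pos hi.2, hi.1]
  calc (1 : ℝ) = 1 + 1 / p - 1 / p := by ring
    _ ≤ ∑ i ∈ univ.filter (fun i => ⌊prefixSum (smallWeight p x) i / (1 + 1 / p)⌋₊ = t),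
          smallWeight p x i :=
      (sub_lt_sum_filter_floor_prefixSum_eq (smallWeight_mem_Icc p hx) (by positivity) hc htot).le
    _ = _ := (sum_filter _ _).symm
    _ ≤ _ := sum_le_sum_of_subset_of_nonneg hsub fun i _ _ => hx i

theorem vol_div_sub_two_le_optCount {p : ℕ} (hp : 0 < p) {b : ℝ} (I : List ℝ)
    (hI : ∀ x ∈ I, 0 ≤ x ∧ x ≤ b) : vol I / max (1 + 1 / (p : ℝ)) (p * b) - 2 ≤ optCount I := by
  have hx : ∀ i, 0 ≤ I.get i ∧ I.get i ≤ b := fun i => hI _ (List.get_mem I i)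
  have hgroups : numBigGroups p I.get + numSmallGroups p I.get ≤ optCount I := by
    refine le_optCount_of_groups I (fun y hy => (hI y hy).1) (coverGroup p I.get) _ fun t ht => ?_
    rcases lt_or_ge t (numBigGroups p I.get) with h | h
    · exact one_le_sum_filter_coverGroup_eq_of_lt (fun i => (hx i).1) hp h
    · obtain ⟨t, rfl⟩ := Nat.exists_eq_add_of_le h
      exact one_le_sum_filter_coverGroup_eq_add (fun i => (hx i).1) hp (by omega)
  rw [vol_eq_sum_get]
  have := sum_div_max_sub_two_le hx hp
  have : ((numBigGroups p I.get + numSmallGroups p I.get : ℕ) : ℝ) ≤ optCount I := by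
    exact_mod_cast hgroups
  push_cast at this
  linarith

end Grouping

section MinRate

lemma minRate_eq_of_bounds {S : Set ℝ} {A : List ℝ → ℕ} {c C : ℝ}
    (hlow : ∀ I : List ℝ, (∀ x ∈ I, x ∈ S) → c * vol I - C ≤ A I)
    (hup : ∀ ε > 0, ∀ᶠ v in atTop,
      ∃ I : List ℝ, (∀ x ∈ I, x ∈ S) ∧ vol I = v ∧ (A I : ℝ) ≤ (c + ε) * v) :
    minRate S A = c := by
  set R : ℝ → Set ℝ := fun v =>
    {r | ∃ I : List ℝ, (∀ x ∈ I, x ∈ S) ∧ vol I = v ∧ r = (A I : ℝ) / v}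
  have hR : ∀ v > 0, ∀ r ∈ R v, c - C / v ≤ r := by
    rintro v hv r ⟨I, hIS, rfl, rfl⟩
    rw [sub_div' hv.ne', div_le_div_iff_of_pos_right hv]
    exact hlow I hIS
  have hlim : Tendsto (fun v => c - C / v) atTop (𝓝 c) := by
    have := (tendsto_const_nhds (x := C)).div_atTop (tendsto_id (α := ℝ) (x := atTop))
    simpa using (tendsto_const_nhds (x := c)).sub this
  refine Tendsto.liminf_eq ?_
  refine tendsto_order.mpr ⟨fun a ha => ?_, fun a ha => ?_⟩
  · filter_upwards [hlim.eventually (lt_mem_nhds ha), eventually_gt_atTop 0, hup 1 one_pos]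
      with v hav hv hI
    obtain ⟨I, hIS, hIv, -⟩ := hI
    exact hav.trans_le (le_csInf ⟨_, I, hIS, hIv, rfl⟩ (hR v hv))
  · filter_upwards [hup ((a - c) / 2) (by linarith), eventually_gt_atTop 0] with v hI hv
    obtain ⟨I, hIS, hIv, hAI⟩ := hI
    calc sInf (R v) ≤ (A I : ℝ) / v := csInf_le ⟨_, hR v hv⟩ ⟨I, hIS, hIv, rfl⟩
      _ ≤ c + (a - c) / 2 := by rwa [div_le_iff₀ hv]
      _ < a := by linarith

lemma eventually_exists_nat_div {P : ℝ → Prop} {s₀ : ℝ} (hs₀ : 0 < s₀)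
    (hP : ∀ᶠ s in 𝓝[<] s₀, P s) : ∀ᶠ v in atTop, ∃ n : ℕ, 0 < n ∧ P (v / n) := by
  obtain ⟨l, hl, hsub⟩ := mem_nhdsLT_iff_exists_Ioo_subset.mp hP
  set l' := max l (s₀ / 2)
  have hl' : 0 < l' ∧ l' < s₀ := ⟨by positivity, max_lt hl (by linarith)⟩
  filter_upwards [eventually_gt_atTop (l' * s₀ / (s₀ - l'))] with v hv
  have hv' : l' * s₀ < (s₀ - l') * v := by rwa [div_lt_iff₀' (by linarith)] at hv
  have hv0 : 0 < v := by nlinarith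
  refine ⟨⌊v / s₀⌋₊ + 1, Nat.succ_pos _, hsub ⟨(le_max_left l (s₀ / 2)).trans_lt ?_, ?_⟩⟩
  · have hv'' : l' * (v / s₀ + 1) < v := by
      rw [← sub_pos, show v - l' * (v / s₀ + 1) = ((s₀ - l') * v - l' * s₀) / s₀ by
        field_simp; ring]
      exact div_pos (by linarith) hs₀
    rw [lt_div_iff₀ (by positivity)]
    push_cast
    calc l' * (⌊v / s₀⌋₊ + 1) ≤ l' * (v / s₀ + 1) := by
          gcongr; exact Nat.floor_le (div_nonneg hv0.le hs₀.le)
      _ < v := hv''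
  · rw [div_lt_iff₀ (by positivity), ← div_lt_iff₀' hs₀]
    exact_mod_cast Nat.lt_floor_add_one (v / s₀)

lemma pos_of_nonneg_lt_one_div {a : ℝ} {p : ℕ} (ha : 0 ≤ a) (hap : a < 1 / p) : 0 < p := by
  rcases Nat.eq_zero_or_pos p with rfl | hp
  · simp at hap; linarith
  · exact hp

theorem minRate_dnfCount {a b : ℝ} {p : ℕ} (ha : 0 ≤ a) (hap : a < 1 / p) (hpb : 1 / p < b) :
    minRate (Set.Ioo a b) dnfCount = 1 / (1 + b) := by
  have hp : (0 : ℝ) < p := Nat.cast_pos.mpr (pos_of_nonneg_lt_one_div ha hap)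
  have hb : 0 < b := (by positivity : (0 : ℝ) < 1 / p).trans hpb
  have hpa : p * a < 1 := by rwa [lt_div_iff₀' hp] at hap
  refine minRate_eq_of_bounds (C := 1 / (1 + b)) (fun I hI => ?_) fun ε hε => ?_
  · have := vol_le_dnfCount I fun x hx => (hI x hx).2.le
    rw [← mul_sub_one, one_div_mul_eq_div, div_le_iff₀ (by positivity)]
    linarith
  have hnhds : ∀ᶠ s in 𝓝 (1 + b), 2 * a + 1 - b < s ∧ 2 * p * a - 1 + b < s ∧ 1 < s ∧
      1 / s < 1 / (1 + b) + ε :=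
    (eventually_gt_nhds (by linarith)).and <| (eventually_gt_nhds (by linarith)).and <|
      (eventually_gt_nhds (by linarith)).and <|
      ContinuousAt.eventually_lt (f := fun s => 1 / s) (by fun_prop (disch := positivity))
        continuousAt_const (by linarith)
  filter_upwards [eventually_exists_nat_div (by positivity)
    ((hnhds.filter_mono nhdsWithin_le_nhds).and eventually_mem_nhdsWithin)] with v hv
  obtain ⟨n, hn, ⟨hta, hxa, hs1, hεs⟩, hsb : v / n < 1 + b⟩ := hv
  set s := v / n
  set L := List.replicate p ((s + 1 - b) / 2 / p)
  have hL : L.sum = (s + 1 - b) / 2 := by simp [L]; field_simp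
  have hx : (s + 1 - b) / 2 / p ∈ Set.Ioo a b := by
    refine ⟨by rw [lt_div_iff₀ hp]; linarith, ?_⟩
    exact (div_lt_div_of_pos_right (by linarith) hp).trans hpb
  have hblock : (L ++ [(s - 1 + b) / 2]).sum = s := by
    rw [List.sum_append, hL, List.sum_singleton]; ring
  have hvs : v = n * s := by simp only [s]; field_simp
  refine ⟨(List.replicate n (L ++ [(s - 1 + b) / 2])).flatten, fun y hy => ?_, ?_, ?_⟩
  · obtain ⟨_, hl, hy⟩ := List.mem_flatten.mp hy
    rw [List.eq_of_mem_replicate hl] at hy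
    rcases List.mem_append.mp hy with hy | hy
    · rw [List.eq_of_mem_replicate hy]; exact hx
    · rw [List.mem_singleton.mp hy]; constructor <;> linarith
  · simp [vol, hblock, hvs]
  · rw [dnfCount_flatten_replicate L (fun y hy => ?_) (by linarith) (by linarith), hvs]
    · calc (n : ℝ) = n * s * (1 / s) := by field_simp
        _ ≤ _ := by rw [mul_comm (1 / (1 + b) + ε)]; gcongr
    · rw [List.eq_of_mem_replicate hy]; exact ha.trans hx.1.le

lemma eventually_exists_optCount_le {a b s₀ : ℝ} (ha : 0 ≤ a) (has : a < s₀) (hsb : s₀ ≤ b)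
    {k : ℕ} (hk : 0 < k) (hks : ((k : ℝ) - 1) * s₀ ≤ 1) {ε : ℝ} (hε : 0 < ε) :
    ∀ᶠ v in atTop, ∃ I : List ℝ, (∀ x ∈ I, x ∈ Set.Ioo a b) ∧ vol I = v ∧
      (optCount I : ℝ) ≤ (1 / (k * s₀) + ε) * v := by
  have hs₀ : 0 < s₀ := ha.trans_lt has
  have hk' : (0 : ℝ) < k := Nat.cast_pos.mpr hk
  have hnhds : ∀ᶠ s in 𝓝 s₀, a < s ∧ 1 / (k * s) < 1 / (k * s₀) + ε :=
    (eventually_gt_nhds has).and <|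
      ContinuousAt.eventually_lt (f := fun s : ℝ => 1 / (k * s)) (by fun_prop (disch := positivity))
        continuousAt_const (by linarith)
  filter_upwards [eventually_exists_nat_div hs₀
    ((hnhds.filter_mono nhdsWithin_le_nhds).and eventually_mem_nhdsWithin)] with v hv
  obtain ⟨n, hn, ⟨has, hεs⟩, hss₀ : v / n < s₀⟩ := hv
  set s := v / n
  have hs : 0 < s := ha.trans_lt has
  have hvs : v = n * s := by simp only [s]; field_simp
  have hks' : ((k : ℝ) - 1) * s < 1 := by
    rcases (sub_nonneg.mpr (Nat.one_le_cast (α := ℝ).mpr hk)).eq_or_lt with h | h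
    · rw [← h, zero_mul]; exact one_pos
    · nlinarith
  refine ⟨List.replicate n s, fun y hy => ?_, by simp [vol, hvs], ?_⟩
  · rw [List.eq_of_mem_replicate hy]; exact ⟨has, hss₀.trans_le hsb⟩
  · have := optCount_replicate_mul_le hs hks' n
    have : (optCount (List.replicate n s) : ℝ) * k ≤ n := by exact_mod_cast this
    calc (optCount (List.replicate n s) : ℝ) ≤ n / k := by rwa [le_div_iff₀ hk']
      _ = v * (1 / (k * s)) := by rw [hvs]; field_simp
      _ ≤ _ := by rw [mul_comm]; gcongr; rw [hvs]; positivity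

theorem minRate_optCount {a b : ℝ} {p : ℕ} (ha : 0 ≤ a) (hap : a < 1 / p) (hpb : 1 / p < b)
    (hbp : ((p : ℝ) - 1) * b ≤ 1) :
    minRate (Set.Ioo a b) optCount = 1 / max (1 + 1 / (p : ℝ)) (p * b) := by
  have hp := pos_of_nonneg_lt_one_div ha hap
  refine minRate_eq_of_bounds (C := 2) (fun I hI => ?_) fun ε hε => ?_
  · rw [one_div_mul_eq_div]
    exact vol_div_sub_two_le_optCount hp I fun x hx => ⟨ha.trans (hI x hx).1.le, (hI x hx).2.le⟩
  rcases le_total (1 + 1 / (p : ℝ)) (p * b) with h | h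
  · rw [max_eq_right h]
    exact eventually_exists_optCount_le ha (hap.trans hpb) le_rfl hp hbp hε
  · have hk : (((p + 1 : ℕ) : ℝ) - 1) * (1 / p) ≤ 1 := by push_cast; field_simp; linarith
    have := eventually_exists_optCount_le ha hap hpb.le (Nat.succ_pos p) hk hε
    rwa [max_eq_left h, show (1 : ℝ) + 1 / p = ((p + 1 : ℕ) : ℝ) * (1 / p) by
      push_cast; field_simp]

end MinRate

theorem dnf_minmin_restricted_general (a b : ℝ) (p : ℕ) (hp : 2 ≤ p)
    (hsub : Set.Ioo a b ⊆ Set.Ioo (0:ℝ) 1)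
    (hpb : 1/(p:ℝ) < b)
    (hpmax : ∀ l : ℕ, 1 ≤ l → 1/(l:ℝ) < b → 1/(l:ℝ) ≤ 1/(p:ℝ))
    (hap : a < 1/(p:ℝ)) :
    minRate (Set.Ioo a b) dnfCount / minRate (Set.Ioo a b) optCount
      = max ((1 + 1/(p:ℝ))/(1 + b)) ((p:ℝ)*b/(1 + b)) := by
  have hb : 0 < b := (by positivity : (0 : ℝ) < 1 / p).trans hpb
  have ha : 0 ≤ a := by
    by_contra! ha
    linarith [(hsub ⟨show a < a / 2 by linarith, show a / 2 < b by linarith⟩).1]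
  have hbp : ((p : ℝ) - 1) * b ≤ 1 := by
    have hp1 : (1 : ℝ) < p := by exact_mod_cast hp
    by_contra! h
    have := hpmax (p - 1) (by omega) (by
      rw [Nat.cast_sub (by omega), Nat.cast_one, div_lt_iff₀ (by linarith), mul_comm]; exact h)
    rw [Nat.cast_sub (by omega), Nat.cast_one] at this
    exact absurd this (not_le.mpr (one_div_lt_one_div_of_lt (by linarith) (by linarith)))
  rw [minRate_dnfCount ha hap hpb, minRate_optCount ha hap hpb hbp, div_div_eq_mul_div,
    max_div_div_right (by positivity)]
  ring

/-- If `(a,b) ⊆ (0,1)` contains a point `1/l` (integer `l ≥ 2`), and `1/p` is the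
maximal point of the form `1/l` below `b`, with `1/p ∈ (a,b)`, then DNF restricted
to item sizes in `(a,b)` has min/min ratio `max{(1+1/p)/(1+b), p·b/(1+b)}`. -/
theorem dnf_minmin_restricted (a b : ℝ) (p : ℕ) (hp : 2 ≤ p)
    (hsub : Set.Ioo a b ⊆ Set.Ioo (0:ℝ) 1)
    (hborder : ∃ l : ℕ, 2 ≤ l ∧ (1/(l:ℝ)) ∈ Set.Ioo a b)
    (hpb : 1/(p:ℝ) < b)
    (hpmax : ∀ l : ℕ, 1 ≤ l → 1/(l:ℝ) < b → 1/(l:ℝ) ≤ 1/(p:ℝ))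
    (hap : a < 1/(p:ℝ)) :
    minRate (Set.Ioo a b) dnfCount / minRate (Set.Ioo a b) optCount
      = max ((1 + 1/(p:ℝ))/(1 + b)) ((p:ℝ)*b/(1 + b)) :=
  dnf_minmin_restricted_general a b p hp hsub hpb hpmax hap
end

section
/- Let p ≥ 2 be an integer and let x_1, …, x_p be real numbers with 0 < x_i < 1/(p−1) for every i and x_1 + ⋯ + x_p ≥ 1. Then the number of indices i with x_i < 1/(p+1) is at most the number of indices i with x_i ≥ 1/p. -/
open Filter MeasureTheory

/-!
Compare every item with the average `1/p`: a large item exceeds it by less than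
`1/(p(p-1))`, a small one falls short of it by more than `1/(p(p+1))`, and any other item
falls short of it. The deviations sum to `∑ x - 1 ≥ 0`, so `s (p - 1) < l (p + 1)` for the
numbers `s` of small and `l` of large items. If `s > l`, then `2l + 1 ≤ s + l ≤ p`, which makes
`s (p - 1) ≥ (l + 1)(p - 1) ≥ l (p + 1)`.
-/

open Finset

theorem card_le_of_mul_pred_lt_mul_succ {s l p : ℕ} (h : s * (p - 1) < l * (p + 1))
    (hsl : s + l ≤ p) : s ≤ l := by
  by_contra! hls
  obtain ⟨n, rfl⟩ : ∃ n, p = n + 1 := ⟨p - 1, by omega⟩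
  rw [Nat.add_sub_cancel] at h
  nlinarith

/- The deviation of `y` from the average `1/p`, in units of `1/(p(p²-1))`. -/
theorem deviation_lt_of_lt_one_div_sub_one {p y : ℝ} (hp : 1 < p) (hy : y < 1 / (p - 1)) :
    p * (p ^ 2 - 1) * y < p ^ 2 - 1 + (p + 1) * (if 1 / p ≤ y then 1 else 0)
      - (p - 1) * (if y < 1 / (p + 1) then 1 else 0) := by
  have hp0 : 0 < p := by linarith
  rw [lt_div_iff₀ (by linarith)] at hy
  split_ifs with hlarge hsmall hsmall
  · have : 1 / (p + 1) < 1 / p := by gcongr; linarith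
    linarith
  · nlinarith [mul_lt_mul_of_pos_left hy (by positivity : 0 < p * (p + 1))]
  · rw [lt_div_iff₀ (by linarith)] at hsmall
    nlinarith [mul_lt_mul_of_pos_left hsmall (by nlinarith : 0 < p * (p - 1))]
  · rw [not_le, lt_div_iff₀ hp0] at hlarge
    nlinarith [mul_lt_mul_of_pos_left hlarge (by nlinarith : 0 < p ^ 2 - 1)]

theorem card_small_mul_lt_card_large_mul {ι : Type*} [Fintype ι] {p : ℕ} (hp : 2 ≤ p)
    (hcard : Fintype.card ι = p) {x : ι → ℝ} (hlt : ∀ i, x i < 1 / ((p : ℝ) - 1))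
    (hsum : 1 ≤ ∑ i, x i) :
    #{i | x i < 1 / ((p : ℝ) + 1)} * (p - 1) < #{i | 1 / (p : ℝ) ≤ x i} * (p + 1) := by
  have hpR : (2 : ℝ) ≤ p := by exact_mod_cast hp
  have hnonempty : (univ : Finset ι).Nonempty := by
    rw [← card_pos, card_univ]; omega
  have hdeviations := calc
    (p : ℝ) * (p ^ 2 - 1) ≤ p * (p ^ 2 - 1) * ∑ i, x i :=
      le_mul_of_one_le_right (by nlinarith) hsum
    _ = ∑ i, p * (p ^ 2 - 1) * x i := mul_sum _ _ _
    _ < _ := sum_lt_sum_of_nonempty hnonempty fun i _ =>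
      deviation_lt_of_lt_one_div_sub_one (by linarith) (hlt i)
  simp only [sum_sub_distrib, sum_add_distrib, ← mul_sum, sum_boole, sum_const, card_univ,
    hcard, nsmul_eq_mul] at hdeviations
  have hmain : ((#{i | x i < 1 / ((p : ℝ) + 1)} * (p - 1) : ℕ) : ℝ) <
      (#{i | 1 / (p : ℝ) ≤ x i} * (p + 1) : ℕ) := by
    push_cast [Nat.cast_sub (by omega : 1 ≤ p)]
    linarith
  exact_mod_cast hmain

theorem small_le_large_in_covered_bin_general (p : ℕ) (hp : 2 ≤ p) (x : Fin p → ℝ)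
    (hlt : ∀ i, x i < 1/((p:ℝ)-1))
    (hsum : 1 ≤ ∑ i, x i) :
    (Finset.univ.filter fun i => x i < 1/((p:ℝ)+1)).card ≤
    (Finset.univ.filter fun i => 1/(p:ℝ) ≤ x i).card := by
  refine card_le_of_mul_pred_lt_mul_succ
    (card_small_mul_lt_card_large_mul hp (Fintype.card_fin p) hlt hsum) ?_
  rw [← card_union_of_disjoint]
  · exact (card_le_univ _).trans_eq (Fintype.card_fin p)
  · refine disjoint_filter.2 fun i _ hsmall hlarge => ?_
    have hp0 : (0 : ℝ) < p := Nat.cast_pos.2 (by omega)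
    linarith [one_div_lt_one_div_of_lt hp0 (lt_add_one (p : ℝ))]

/-- If `p ≥ 2` and `x₁, …, x_p` satisfy `0 < xᵢ < 1/(p-1)` and `x₁ + ⋯ + x_p ≥ 1`,
then the number of indices with `xᵢ < 1/(p+1)` is at most the number of indices
with `xᵢ ≥ 1/p`. -/
theorem small_le_large_in_covered_bin (p : ℕ) (hp : 2 ≤ p) (x : Fin p → ℝ)
    (hpos : ∀ i, 0 < x i) (hlt : ∀ i, x i < 1/((p:ℝ)-1))
    (hsum : 1 ≤ ∑ i, x i) :
    (Finset.univ.filter fun i => x i < 1/((p:ℝ)+1)).card ≤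
    (Finset.univ.filter fun i => 1/(p:ℝ) ≤ x i).card :=
  small_le_large_in_covered_bin_general p hp x hlt hsum
end

section
/- For each n ≥ 2, let I_n be a random sequence of n independent items, each of which has size ε_n with probability 1/2 and size 1 − ε_n with probability 1/2, where 0 < ε_n < 1/n. Then lim_{n→∞} E[DNF(I_n)]/n = 2/5, while lim_{n→∞} E[Opt(I_n)]/n = 1/2; consequently, lim_{n→∞} E[DNF(I_n)]/E[Opt(I_n)] = 4/5. -/
open Filter MeasureTheory

/-!
Encode an input by its coin flips `f : Fin n → Bool` (`true` for a small item `ε`). Since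
`n ε < 1`, small items alone never cover a bin, so the open bin of DNF is empty, holds only
small items, or holds one large item, and DNF runs a three-state Markov chain that covers a bin
exactly when a large item meets a nonempty bin or any item meets a large one. With a solution of
the Poisson equation of this chain as potential, `10 · (covered bins) + potential` grows by
exactly `4` per item in expectation, so `E[DNF] = 2n/5 + O(1)`.

Every covered bin needs two items, so `Opt ≤ n/2`; pairing small with large items gives
`Opt ≥ min(#small, #large) = (n - |#small - #large|)/2`. The walk `#small - #large` has second
moment `n`, so by Cauchy–Schwarz `E[Opt] ≥ n/2 - √n/2`.
-/

open scoped Finset Topology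

lemma sum_ofFn_succ_bool {M : Type*} [AddCommMonoid M] (n : ℕ) (G : List Bool → M) :
    ∑ f : Fin (n + 1) → Bool, G (List.ofFn f)
      = ∑ f : Fin n → Bool, (G (List.ofFn f ++ [true]) + G (List.ofFn f ++ [false])) := by
  rw [← (Fin.snocEquiv fun _ => Bool).sum_comp, Fintype.sum_prod_type, Finset.sum_comm]
  refine Finset.sum_congr rfl fun f _ => ?_
  rw [Fintype.sum_bool]
  simp only [Fin.snocEquiv, Equiv.coe_fn_mk, List.ofFn_succ', Fin.snoc_castSucc, Fin.snoc_last,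
    List.concat_eq_append]

lemma sum_ofFn_eq_of_sum_append_bool {R : Type*} [CommSemiring R] (G : List Bool → R) (c : R)
    (hG : ∀ l, G (l ++ [true]) + G (l ++ [false]) = 2 * (G l + c)) (n : ℕ) :
    ∑ f : Fin n → Bool, G (List.ofFn f) = 2 ^ n * (G [] + n * c) := by
  induction n with
  | zero => simp
  | succ n ih =>
    simp only [sum_ofFn_succ_bool, hG, ← Finset.mul_sum, Finset.sum_add_distrib, ih,
      Finset.sum_const, Finset.card_univ, Fintype.card_fun, Fintype.card_bool, Fintype.card_fin,
      nsmul_eq_mul]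
    push_cast
    ring

def twoPoint (ε : ℝ) (b : Bool) : ℝ := if b then ε else 1 - ε

inductive BinContent
  | empty
  | small
  | large

namespace BinContent

def step : BinContent × ℕ → Bool → BinContent × ℕ
  | (empty, c), true => (small, c)
  | (empty, c), false => (large, c)
  | (small, c), true => (small, c)
  | (small, c), false => (empty, c + 1)
  | (large, c), _ => (empty, c + 1)

/-- Ten times a solution `h` of the Poisson equation `h s + 2/5 = E[closed + h s']` of the
chain `step` driven by fair coin flips; `2/5` is its long-run rate of covered bins. -/
def potential : BinContent → ℝ
  | empty => 0
  | small => 2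
  | large => 6

lemma potential_nonneg (a : BinContent) : 0 ≤ potential a := by
  cases a <;> norm_num [potential]

lemma potential_le_six (a : BinContent) : potential a ≤ 6 := by
  cases a <;> norm_num [potential]

lemma potential_step (s : BinContent × ℕ) :
    (10 * (step s true).2 + potential (step s true).1)
      + (10 * (step s false).2 + potential (step s false).1)
      = 2 * (10 * s.2 + potential s.1 + 4) := by
  obtain ⟨_ | _ | _, c⟩ := s <;> simp only [step, potential] <;> push_cast <;> ring

/-- `v` is a level of DNF's open bin with content `a` when `r` items are still to come; the
bound `v + r * ε < 1` says that the small items alone never cover a bin. -/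
def Represents (ε : ℝ) (r : ℕ) : BinContent → ℝ → Prop
  | empty, v => v = 0 ∧ r * ε < 1
  | small, v => ε ≤ v ∧ v + r * ε < 1
  | large, v => v = 1 - ε ∧ r * ε < 1

variable {ε : ℝ}

lemma Represents.dnfStep_twoPoint {r : ℕ} {s : ℝ × ℕ} {t : BinContent × ℕ} (hε : 0 < ε)
    (hε2 : 2 * ε ≤ 1) (hc : s.2 = t.2) (h : Represents ε (r + 1) t.1 s.1) (b : Bool) :
    (dnfStep s (twoPoint ε b)).2 = (step t b).2 ∧
      Represents ε r (step t b).1 (dnfStep s (twoPoint ε b)).1 := by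
  obtain ⟨v, c⟩ := s
  obtain ⟨a, _⟩ := t
  subst hc
  have hr := mul_nonneg r.cast_nonneg hε.le
  cases a <;> cases b <;>
    simp only [Represents, step, dnfStep, twoPoint, Bool.false_eq_true, if_true, if_false] at h ⊢ <;>
    push_cast at h <;> split_ifs <;> simp only [true_and] <;>
    first | (exfalso; linarith) | (constructor <;> linarith) | linarith

lemma foldl_dnfStep_twoPoint (hε : 0 < ε) (hε2 : 2 * ε ≤ 1) (l : List Bool) (s : ℝ × ℕ)
    (t : BinContent × ℕ) (hc : s.2 = t.2) (h : Represents ε l.length t.1 s.1) :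
    ((l.map (twoPoint ε)).foldl dnfStep s).2 = (l.foldl step t).2 := by
  induction l generalizing s t with
  | nil => exact hc
  | cons b l ih =>
    obtain ⟨hc', h'⟩ := h.dnfStep_twoPoint hε hε2 hc b
    exact ih _ _ hc' h'

end BinContent

open BinContent in
lemma dnfCount_map_twoPoint {ε : ℝ} (hε : 0 < ε) (hε2 : 2 * ε ≤ 1) (l : List Bool)
    (hl : l.length * ε < 1) :
    dnfCount (l.map (twoPoint ε)) = (l.foldl step (empty, 0)).2 :=
  foldl_dnfStep_twoPoint hε hε2 l _ _ rfl ⟨rfl, hl⟩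

lemma bernE_eq_sum_map_twoPoint (A : List ℝ → ℕ) (n : ℕ) (ε : ℝ) :
    bernE A n ε = (∑ f : Fin n → Bool, (A ((List.ofFn f).map (twoPoint ε)) : ℝ)) / 2 ^ n := by
  simp only [bernE, List.map_ofFn]
  rfl

open BinContent in
lemma sum_potential_foldl_step (n : ℕ) :
    ∑ f : Fin n → Bool, (10 * (((List.ofFn f).foldl step (empty, 0)).2 : ℝ)
        + potential ((List.ofFn f).foldl step (empty, 0)).1) = 2 ^ n * (4 * n) := by
  refine (sum_ofFn_eq_of_sum_append_bool (fun l => 10 * ((l.foldl step (empty, 0)).2 : ℝ)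
    + potential (l.foldl step (empty, 0)).1) 4 (fun l => ?_) n).trans ?_
  · simpa only [List.foldl_append, List.foldl_cons, List.foldl_nil] using potential_step _
  · simp [potential, mul_comm]

open BinContent in
lemma abs_bernE_dnfCount_sub_le {ε : ℝ} {n : ℕ} (hε : 0 < ε) (hε2 : 2 * ε ≤ 1)
    (hn : n * ε < 1) : |bernE dnfCount n ε - 2 / 5 * n| ≤ 3 / 5 := by
  set S : (Fin n → Bool) → BinContent × ℕ := fun f => (List.ofFn f).foldl step (empty, 0)
  have hE : bernE dnfCount n ε = (∑ f, ((S f).2 : ℝ)) / 2 ^ n := by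
    rw [bernE_eq_sum_map_twoPoint]
    congr 1
    refine Finset.sum_congr rfl fun f _ => ?_
    rw [dnfCount_map_twoPoint hε hε2 _ (by rwa [List.length_ofFn])]
  have hsum := sum_potential_foldl_step n
  rw [Finset.sum_add_distrib, ← Finset.mul_sum] at hsum
  have hpot0 : 0 ≤ ∑ f, potential (S f).1 :=
    Finset.sum_nonneg fun f _ => potential_nonneg _
  have hpot6 : ∑ f, potential (S f).1 ≤ 2 ^ n * 6 := by
    simpa using Finset.sum_le_sum fun f (_ : f ∈ Finset.univ) => potential_le_six (S f).1
  have h2n : (0 : ℝ) < 2 ^ n := by positivity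
  rw [hE, abs_le, le_sub_iff_add_le, sub_le_iff_le_add, le_div_iff₀ h2n, div_le_iff₀ h2n]
  constructor <;> nlinarith

lemma two_mul_card_le_of_one_le_sum_fiber {ι β : Type*} [Fintype ι] [DecidableEq β]
    (w : ι → ℝ) (h1 : ∀ i, w i < 1) (g : ι → β) (s : Finset β)
    (hs : ∀ b ∈ s, 1 ≤ ∑ i with g i = b, w i) : 2 * s.card ≤ Fintype.card ι := by
  have hfiber : ∀ b ∈ s, 2 ≤ #{i | g i = b} := by
    intro b hb
    by_contra! hlt
    obtain ⟨i, hi, -⟩ :=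
      Finset.exists_ne_zero_of_sum_ne_zero (zero_lt_one.trans_le (hs b hb)).ne'
    have hF : ({i | g i = b} : Finset ι) = {i} := Finset.eq_singleton_iff_unique_mem.mpr
      ⟨hi, fun j hj => Finset.card_le_one.mp (by omega) j hj i hi⟩
    have := hs b hb
    rw [hF, Finset.sum_singleton] at this
    exact (h1 i).not_ge this
  calc 2 * s.card = ∑ _b ∈ s, 2 := by rw [Finset.sum_const, smul_eq_mul, mul_comm]
    _ ≤ ∑ b ∈ s, #{i | g i = b} := Finset.sum_le_sum hfiber
    _ = #{i | g i ∈ s} := Finset.sum_card_fiberwise_eq_card_filter _ _ _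
    _ ≤ Fintype.card ι := Finset.card_le_univ _

lemma two_mul_optCount_le_length (L : List ℝ) (h1 : ∀ x ∈ L, x < 1) :
    2 * optCount L ≤ L.length := by
  have hsup : optCount L ≤ L.length / 2 := Finset.sup_le fun g _ => by
    rw [Nat.le_div_iff_mul_le two_pos, mul_comm]
    simpa using two_mul_card_le_of_one_le_sum_fiber _ (fun i => h1 _ (L.get_mem i)) g _
      fun b hb => (Finset.mem_filter.mp hb).2
  calc 2 * optCount L ≤ 2 * (L.length / 2) := Nat.mul_le_mul_left 2 hsup
    _ ≤ L.length := Nat.mul_div_le _ _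

lemma card_le_optCount_of_pairing {κ : Type*} [Fintype κ] (L : List ℝ) (h0 : ∀ x ∈ L, 0 ≤ x)
    (a b : κ → Fin L.length) (ha : a.Injective) (hb : b.Injective) (hab : ∀ j k, a j ≠ b k)
    (hcover : ∀ j, 1 ≤ L.get (a j) + L.get (b j)) : Fintype.card κ ≤ optCount L := by
  classical
  -- put `a j` into bin `b j` and leave every other item in its own bin
  set g : Fin L.length → Fin L.length := Function.extend a b id
  have hga : ∀ j, g (a j) = b j := ha.extend_apply b id
  have hgb : ∀ j, g (b j) = b j := fun j =>
    Function.extend_apply' _ _ _ fun ⟨k, hk⟩ => hab k j hk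
  refine le_trans ?_ (Finset.le_sup (f := fun g : Fin L.length → Fin L.length =>
    #{β | 1 ≤ ∑ i with g i = β, L.get i}) (Finset.mem_univ g))
  calc Fintype.card κ = #(Finset.univ.image b) := (Finset.card_image_of_injective _ hb).symm
    _ ≤ #{β | 1 ≤ ∑ i with g i = β, L.get i} := Finset.card_le_card fun β hβ => by
      obtain ⟨j, -, rfl⟩ := Finset.mem_image.mp hβ
      refine Finset.mem_filter.mpr ⟨Finset.mem_univ _, (hcover j).trans ?_⟩
      rw [← Finset.sum_pair (hab j j)]
      refine Finset.sum_le_sum_of_subset_of_nonneg (fun i hi => ?_)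
        fun i _ _ => h0 _ (L.get_mem i)
      rcases Finset.mem_insert.mp hi with rfl | hi
      · simp [hga]
      · simp [Finset.mem_singleton.mp hi, hgb]

lemma card_filter_get_eq_count {α : Type*} [DecidableEq α] (L : List α) (x : α) :
    #{i : Fin L.length | L.get i = x} = L.count x := by
  have hL : (L : Multiset α) = Finset.univ.val.map L.get := by
    rw [Fin.univ_val_map, List.ofFn_get]
  rw [← Multiset.coe_count, hL, Multiset.count_map]
  simp only [Finset.card, Finset.filter_val, eq_comm]

lemma count_le_optCount_of_count_le (L : List ℝ) (h0 : ∀ z ∈ L, 0 ≤ z) {x y : ℝ} (hxy : x ≠ y)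
    (hcover : 1 ≤ x + y) (hcount : L.count x ≤ L.count y) : L.count x ≤ optCount L := by
  set X : Finset (Fin L.length) := {i | L.get i = x}
  set Y : Finset (Fin L.length) := {i | L.get i = y}
  have hX : ∀ i : X, L.get i = x := fun i => (Finset.mem_filter.mp i.2).2
  have hY : ∀ i : Y, L.get i = y := fun i => (Finset.mem_filter.mp i.2).2
  obtain ⟨e⟩ : Nonempty (X ↪ Y) := Function.Embedding.nonempty_of_card_le <| by
    simpa only [Fintype.card_coe, X, Y, card_filter_get_eq_count] using hcount
  have hcard : Fintype.card X = L.count x := by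
    rw [Fintype.card_coe, card_filter_get_eq_count]
  rw [← hcard]
  refine card_le_optCount_of_pairing L h0 Subtype.val (Subtype.val ∘ e)
    Subtype.val_injective (Subtype.val_injective.comp e.injective) (fun j k hjk => hxy ?_) ?_
  · rw [← hX j, ← hY (e k), hjk, Function.comp_apply]
  · intro j
    rw [hX j, Function.comp_apply, hY (e j)]
    exact hcover

lemma min_count_le_optCount (L : List ℝ) (h0 : ∀ z ∈ L, 0 ≤ z) {x y : ℝ} (hxy : x ≠ y)
    (hcover : 1 ≤ x + y) : min (L.count x) (L.count y) ≤ optCount L := by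
  rcases le_total (L.count x) (L.count y) with hle | hle
  · exact (min_le_left _ _).trans (count_le_optCount_of_count_le L h0 hxy hcover hle)
  · exact (min_le_right _ _).trans
      (count_le_optCount_of_count_le L h0 hxy.symm (by rwa [add_comm]) hle)

lemma sum_sq_count_sub_count (n : ℕ) :
    ∑ f : Fin n → Bool, (((List.ofFn f).count true : ℝ) - (List.ofFn f).count false) ^ 2
      = 2 ^ n * n := by
  refine (sum_ofFn_eq_of_sum_append_bool (fun l => ((l.count true : ℝ) - l.count false) ^ 2) 1
    (fun l => ?_) n).trans ?_
  · simp only [List.count_append, List.count_singleton, beq_self_eq_true, Bool.true_beq,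
      Bool.false_beq, if_true, Bool.not_true, Bool.false_eq_true, if_false]
    push_cast
    ring
  · simp

lemma sum_abs_count_sub_count_le (n : ℕ) :
    ∑ f : Fin n → Bool, |((List.ofFn f).count true : ℝ) - (List.ofFn f).count false|
      ≤ 2 ^ n * √n := by
  have hcs := sq_sum_le_card_mul_sum_sq (s := Finset.univ)
    (f := fun f : Fin n → Bool => |((List.ofFn f).count true : ℝ) - (List.ofFn f).count false|)
  simp only [sq_abs, sum_sq_count_sub_count, Finset.card_univ, Fintype.card_fun,
    Fintype.card_bool, Fintype.card_fin, Nat.cast_pow, Nat.cast_ofNat] at hcs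
  rw [← pow_le_pow_iff_left₀ (Finset.sum_nonneg fun _ _ => abs_nonneg _) (by positivity)
    two_ne_zero, mul_pow, Real.sq_sqrt n.cast_nonneg]
  linarith

lemma twoPoint_injective {ε : ℝ} (hε : 2 * ε ≠ 1) : (twoPoint ε).Injective := by
  intro a b h
  cases a <;> cases b <;> simp only [twoPoint, if_true, Bool.false_eq_true, if_false] at h ⊢ <;>
    exact (hε (by linarith)).elim

lemma mem_map_twoPoint {ε z : ℝ} (hε : 0 < ε) (hε1 : ε < 1) {l : List Bool}
    (hz : z ∈ l.map (twoPoint ε)) : 0 ≤ z ∧ z < 1 := by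
  obtain ⟨b, -, rfl⟩ := List.mem_map.mp hz
  cases b <;> simp only [twoPoint, if_true, Bool.false_eq_true, if_false] <;>
    constructor <;> linarith

lemma two_mul_optCount_map_twoPoint_le {ε : ℝ} (hε : 0 < ε) (hε1 : ε < 1) (l : List Bool) :
    2 * optCount (l.map (twoPoint ε)) ≤ l.length := by
  simpa using two_mul_optCount_le_length _ fun z hz => (mem_map_twoPoint hε hε1 hz).2

lemma length_sub_abs_le_two_mul_optCount {ε : ℝ} (hε : 0 < ε) (hε2 : 2 * ε < 1)
    (l : List Bool) :
    (l.length : ℝ) - |(l.count true : ℝ) - l.count false|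
      ≤ 2 * optCount (l.map (twoPoint ε)) := by
  have hmin := min_count_le_optCount (l.map (twoPoint ε))
    (fun z hz => (mem_map_twoPoint hε (by linarith) hz).1) (x := twoPoint ε true)
    (y := twoPoint ε false) ((twoPoint_injective hε2.ne).ne (by decide))
    (by simp [twoPoint])
  rw [List.count_map_of_injective _ _ (twoPoint_injective hε2.ne),
    List.count_map_of_injective _ _ (twoPoint_injective hε2.ne)] at hmin
  have hmin' : (min (l.count true) (l.count false) : ℝ) ≤ optCount (l.map (twoPoint ε)) := by
    exact_mod_cast hmin
  have hlen : (l.count true : ℝ) + l.count false = l.length := by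
    exact_mod_cast List.count_true_add_count_false l
  linarith [min_add_max (l.count true : ℝ) (l.count false), max_sub_min_eq_abs'
    (l.count true : ℝ) (l.count false)]

lemma abs_bernE_optCount_sub_le {ε : ℝ} (hε : 0 < ε) (hε2 : 2 * ε < 1) (n : ℕ) :
    |bernE optCount n ε - 1 / 2 * n| ≤ √n / 2 := by
  have hlo := Finset.sum_le_sum (s := Finset.univ) fun (f : Fin n → Bool) _ =>
    length_sub_abs_le_two_mul_optCount hε hε2 (List.ofFn f)
  have hhi := Finset.sum_le_sum (s := Finset.univ) fun (f : Fin n → Bool) _ =>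
    (Nat.cast_le (α := ℝ)).mpr (two_mul_optCount_map_twoPoint_le hε (by linarith) (List.ofFn f))
  simp only [List.length_ofFn, Finset.sum_sub_distrib, ← Finset.mul_sum, Nat.cast_mul,
    Nat.cast_ofNat, Finset.sum_const, Finset.card_univ, Fintype.card_fun, Fintype.card_bool,
    Fintype.card_fin, nsmul_eq_mul, Nat.cast_pow] at hlo hhi
  have habs := sum_abs_count_sub_count_le n
  have h2n : (0 : ℝ) < 2 ^ n := by positivity
  rw [bernE_eq_sum_map_twoPoint, abs_le, le_sub_iff_add_le, sub_le_iff_le_add, le_div_iff₀ h2n,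
    div_le_iff₀ h2n]
  constructor <;> nlinarith

lemma tendsto_div_natCast_of_abs_sub_le {a b : ℕ → ℝ} {c : ℝ}
    (hb : Tendsto (fun n => b n / n) atTop (𝓝 0)) (h : ∀ᶠ n in atTop, |a n - c * n| ≤ b n) :
    Tendsto (fun n => a n / n) atTop (𝓝 c) := by
  rw [tendsto_iff_norm_sub_tendsto_zero]
  refine squeeze_zero' (Eventually.of_forall fun n => norm_nonneg _) ?_ hb
  filter_upwards [h, eventually_gt_atTop 0] with n hn hpos
  have hn0 : (0 : ℝ) < n := Nat.cast_pos.mpr hpos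
  rw [Real.norm_eq_abs, div_sub' hn0.ne', abs_div, abs_of_pos hn0, mul_comm]
  gcongr

lemma tendsto_sqrt_div_two_div_natCast : Tendsto (fun n : ℕ => √n / 2 / n) atTop (𝓝 0) := by
  have h := (tendsto_inv_atTop_zero.comp <| Real.tendsto_sqrt_atTop.comp
    tendsto_natCast_atTop_atTop).div_const 2
  rw [zero_div] at h
  refine h.congr fun n => ?_
  simp only [Function.comp_apply, div_right_comm _ (2 : ℝ), Real.sqrt_div_self', one_div]

/-- For `n` independent items, each of size `ε_n` or `1 - ε_n` with probability
1/2 each (`0 < ε_n < 1/n`), `lim E[DNF]/n = 2/5`, `lim E[Opt]/n = 1/2`, and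
consequently `lim E[DNF]/E[Opt] = 4/5`. -/
theorem dnf_two_point_distribution (ε : ℕ → ℝ)
    (hε : ∀ n : ℕ, 2 ≤ n → 0 < ε n ∧ ε n < 1/(n:ℝ)) :
    Filter.Tendsto (fun n : ℕ => bernE dnfCount n (ε n) / (n:ℝ))
      Filter.atTop (nhds (2/5)) ∧
    Filter.Tendsto (fun n : ℕ => bernE optCount n (ε n) / (n:ℝ))
      Filter.atTop (nhds (1/2)) ∧
    Filter.Tendsto (fun n : ℕ => bernE dnfCount n (ε n) / bernE optCount n (ε n))
      Filter.atTop (nhds (4/5)) := by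
  have hsmall : ∀ n, 2 ≤ n → 0 < ε n ∧ 2 * ε n < 1 ∧ n * ε n < 1 := fun n hn => by
    obtain ⟨hpos, hlt⟩ := hε n hn
    have hn' : (2 : ℝ) ≤ n := by exact_mod_cast hn
    have hnε : n * ε n < 1 := by
      rwa [lt_div_iff₀ (by linarith), mul_comm] at hlt
    exact ⟨hpos, by nlinarith, hnε⟩
  have hD : Tendsto (fun n : ℕ => bernE dnfCount n (ε n) / n) atTop (𝓝 (2 / 5)) :=
    tendsto_div_natCast_of_abs_sub_le (tendsto_const_div_atTop_nhds_zero_nat (3 / 5)) <|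
      (eventually_ge_atTop 2).mono fun n hn =>
        let ⟨hpos, h2, hnε⟩ := hsmall n hn
        abs_bernE_dnfCount_sub_le hpos h2.le hnε
  have hO : Tendsto (fun n : ℕ => bernE optCount n (ε n) / n) atTop (𝓝 (1 / 2)) :=
    tendsto_div_natCast_of_abs_sub_le tendsto_sqrt_div_two_div_natCast <|
      (eventually_ge_atTop 2).mono fun n hn =>
        let ⟨hpos, h2, _⟩ := hsmall n hn
        abs_bernE_optCount_sub_le hpos h2 n
  refine ⟨hD, hO, ?_⟩
  have hratio := hD.div hO (by norm_num)
  rw [show (2 / 5 : ℝ) / (1 / 2) = 4 / 5 by norm_num] at hratio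
  refine hratio.congr' ((eventually_gt_atTop 0).mono fun n hn => ?_)
  exact div_div_div_cancel_right₀ (Nat.cast_ne_zero.mpr hn.ne') _ _
end
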